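/- arXiv:2203.10389 — 8 statements merged into one kernel-verified Lean document; each statement's English description precedes it below -/
import Mathlib

section
/- Let B₁ be an m₁-bi-ideal of A and B₂ be an m₂-bi-ideal of A, where m₁, m₂ are positive integers. Then (B₁B₂] is a max(m₁,m₂)-bi-ideal of A. -/
open Pointwise

/-- The downward closure `(H] = {t : t ≤ h for some h ∈ H}`. -/
def dcl {A : Type*} [LE A] (H : Set A) : Set A := {t | ∃ h ∈ H, t ≤ h}

/-- A subsemigroup: a nonempty subset closed under multiplication. -/
def IsSubsemigroup {A : Type*} [Mul A] (S : Set A) : Prop :=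
  S.Nonempty ∧ S * S ⊆ S

/-- An m-left ideal: a subsemigroup `L` with `A^m L ⊆ L` and `(L] = L`. -/
def IsMLeftIdeal {A : Type*} [Monoid A] [LE A] (m : ℕ) (L : Set A) : Prop :=
  IsSubsemigroup L ∧ (Set.univ : Set A) ^ m * L ⊆ L ∧ dcl L = L

/-- An m-right ideal: a subsemigroup `R` with `R A^m ⊆ R` and `(R] = R`. -/
def IsMRightIdeal {A : Type*} [Monoid A] [LE A] (m : ℕ) (R : Set A) : Prop :=
  IsSubsemigroup R ∧ R * (Set.univ : Set A) ^ m ⊆ R ∧ dcl R = R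

/-- An m-bi-ideal: a subsemigroup `B` with `B A^m B ⊆ B` and `(B] = B`. -/
def IsMBiIdeal {A : Type*} [Monoid A] [LE A] (m : ℕ) (B : Set A) : Prop :=
  IsSubsemigroup B ∧ B * (Set.univ : Set A) ^ m * B ⊆ B ∧ dcl B = B

/-- An m-quasi-ideal: a subsemigroup `Q` with `(A^m Q] ∩ (Q A^m] ⊆ Q` and `(Q] = Q`. -/
def IsMQuasiIdeal {A : Type*} [Monoid A] [LE A] (m : ℕ) (Q : Set A) : Prop :=
  IsSubsemigroup Q ∧
    dcl ((Set.univ : Set A) ^ m * Q) ∩ dcl (Q * (Set.univ : Set A) ^ m) ⊆ Q ∧ dcl Q = Q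

/-- `A` is m-regular if every `a` satisfies `a ≤ a x a` for some `x ∈ A^m`. -/
def IsMRegular (A : Type*) [Monoid A] [LE A] (m : ℕ) : Prop :=
  ∀ a : A, ∃ x ∈ (Set.univ : Set A) ^ m, a ≤ a * x * a

/-- `P` has the m-intersection property if it is the intersection of an
m-left ideal and an m-right ideal. -/
def HasMIntersectionProperty {A : Type*} [Monoid A] [LE A] (m : ℕ) (P : Set A) : Prop :=
  ∃ L R : Set A, IsMLeftIdeal m L ∧ IsMRightIdeal m R ∧ P = L ∩ R

theorem product_of_bi_ideals_is_max_bi_ideal {A : Type*} [Monoid A] [PartialOrder A]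
    [CovariantClass A A (· * ·) (· ≤ ·)] [CovariantClass A A (Function.swap (· * ·)) (· ≤ ·)]
    (m₁ m₂ : ℕ) (hm₁ : 0 < m₁) (hm₂ : 0 < m₂) (B₁ B₂ : Set A)
    (hB₁ : IsMBiIdeal m₁ B₁) (hB₂ : IsMBiIdeal m₂ B₂) :
    IsMBiIdeal (max m₁ m₂) (dcl (B₁ * B₂)) := by
  obtain ⟨⟨hne₁, hmul₁⟩, habs₁, hdc₁⟩ := hB₁
  obtain ⟨⟨hne₂, hmul₂⟩, habs₂, hdc₂⟩ := hB₂
  rw [Set.univ_pow hm₁.ne'] at habs₁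
  -- key absorption fact
  have key : ∀ a x b : A, a ∈ B₁ * B₂ → b ∈ B₁ * B₂ → a * x * b ∈ B₁ * B₂ := by
    rintro _ x _ ⟨b₁, hb₁, b₂, hb₂, rfl⟩ ⟨c₁, hc₁, c₂, hc₂, rfl⟩
    have h1 : b₁ * (b₂ * x) * c₁ ∈ B₁ := by
      apply habs₁
      exact Set.mul_mem_mul (Set.mul_mem_mul hb₁ (Set.mem_univ _)) hc₁
    have : b₁ * (b₂ * x) * c₁ * c₂ ∈ B₁ * B₂ := Set.mul_mem_mul h1 hc₂
    convert this using 1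
    simp [mul_assoc]
  have subdcl : B₁ * B₂ ⊆ dcl (B₁ * B₂) := fun t ht => ⟨t, ht, le_refl t⟩
  refine ⟨⟨?_, ?_⟩, ?_, ?_⟩
  · obtain ⟨b₁, hb₁⟩ := hne₁
    obtain ⟨b₂, hb₂⟩ := hne₂
    exact ⟨b₁ * b₂, subdcl (Set.mul_mem_mul hb₁ hb₂)⟩
  · rintro _ ⟨t, ⟨a, ha, hta⟩, s, ⟨b, hb, hsb⟩, rfl⟩
    refine ⟨a * b, ?_, mul_le_mul' hta hsb⟩
    have := key a 1 b ha hb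
    simpa using this
  · rintro _ ⟨_, ⟨t, ⟨a, ha, hta⟩, x, hx, rfl⟩, s, ⟨b, hb, hsb⟩, rfl⟩
    exact ⟨a * x * b, key a x b ha hb, mul_le_mul' (mul_le_mul' hta (le_refl x)) hsb⟩
  · ext t
    constructor
    · rintro ⟨h, ⟨h', hh', hle'⟩, hle⟩
      exact ⟨h', hh', le_trans hle hle'⟩
    · intro ht
      exact ⟨t, ht, le_refl t⟩
end

section
/- Let m be a positive integer, L an m-left ideal of A, and R an m-right ideal of A. Then R ∩ L is nonempty and R ∩ L is an m-quasi-ideal of A. -/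
open Pointwise

theorem inter_m_right_m_left_is_m_quasi_ideal {A : Type*} [Monoid A] [PartialOrder A]
    [CovariantClass A A (· * ·) (· ≤ ·)] [CovariantClass A A (Function.swap (· * ·)) (· ≤ ·)]
    (m : ℕ) (hm : 0 < m) (L R : Set A)
    (hL : IsMLeftIdeal m L) (hR : IsMRightIdeal m R) :
    (R ∩ L).Nonempty ∧ IsMQuasiIdeal m (R ∩ L) := by
  obtain ⟨⟨⟨l, hl⟩, hLmul⟩, hLideal, hLdcl⟩ := hL
  obtain ⟨⟨⟨r, hr⟩, hRmul⟩, hRideal, hRdcl⟩ := hR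
  rw [Set.univ_pow hm.ne'] at hLideal hRideal
  have memL : ∀ a b, b ∈ L → a * b ∈ L := fun a b hb =>
    hLideal ⟨a, Set.mem_univ a, b, hb, rfl⟩
  have memR : ∀ a b, a ∈ R → a * b ∈ R := fun a b ha =>
    hRideal ⟨a, ha, b, Set.mem_univ b, rfl⟩
  have hne : (R ∩ L).Nonempty := ⟨r * l, memR r l hr, memL r l hl⟩
  refine ⟨hne, ⟨hne, ?_⟩, ?_, ?_⟩
  · rintro x ⟨a, ⟨ha1, ha2⟩, b, ⟨hb1, hb2⟩, rfl⟩
    exact ⟨memR a b ha1, memL a b hb2⟩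
  · rw [Set.univ_pow hm.ne']
    rintro x ⟨⟨y, ⟨a, _, b, ⟨hb1, hb2⟩, rfl⟩, hxy⟩, ⟨z, ⟨c, ⟨hc1, hc2⟩, d, _, rfl⟩, hxz⟩⟩
    constructor
    · rw [← hRdcl]; exact ⟨c * d, memR c d hc1, hxz⟩
    · rw [← hLdcl]; exact ⟨a * b, memL a b hb2, hxy⟩
  · apply Set.Subset.antisymm
    · rintro x ⟨h, ⟨hh1, hh2⟩, hxh⟩
      exact ⟨hRdcl ▸ ⟨h, hh1, hxh⟩, hLdcl ▸ ⟨h, hh2, hxh⟩⟩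
    · exact fun x hx => ⟨x, hx, le_refl x⟩
end

section
/- Let m be a positive integer and x ∈ A. Then the set ({x} ∪ A^m x] ∩ ({x} ∪ x A^m] is an m-quasi-ideal of A containing x, and it is contained in every m-quasi-ideal of A that contains x; that is, it is the least m-quasi-ideal of A containing x. -/
open Pointwise

theorem principal_m_quasi_ideal {A : Type*} [Monoid A] [PartialOrder A]
    [CovariantClass A A (· * ·) (· ≤ ·)] [CovariantClass A A (Function.swap (· * ·)) (· ≤ ·)]
    (m : ℕ) (hm : 0 < m) (x : A) :
    IsMQuasiIdeal m
        (dcl ({x} ∪ (Set.univ : Set A) ^ m * {x}) ∩ dcl ({x} ∪ {x} * (Set.univ : Set A) ^ m)) ∧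
      x ∈ dcl ({x} ∪ (Set.univ : Set A) ^ m * {x}) ∩ dcl ({x} ∪ {x} * (Set.univ : Set A) ^ m) ∧
      ∀ Q : Set A, IsMQuasiIdeal m Q → x ∈ Q →
        dcl ({x} ∪ (Set.univ : Set A) ^ m * {x}) ∩ dcl ({x} ∪ {x} * (Set.univ : Set A) ^ m) ⊆ Q := by
  have hu : (Set.univ : Set A) ^ m = Set.univ := Set.univ_pow hm.ne'
  have key_l : ∀ t : A, t ∈ dcl ({x} ∪ (Set.univ : Set A) ^ m * {x}) ↔ ∃ a, t ≤ a * x := by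
    intro t
    constructor
    · rintro ⟨h, hh, hle⟩
      rcases hh with hh | ⟨a, -, y, hy, rfl⟩
      · exact ⟨1, by rwa [one_mul, ← Set.mem_singleton_iff.mp hh]⟩
      · exact ⟨a, by rwa [Set.mem_singleton_iff.mp hy] at hle⟩
    · rintro ⟨a, hle⟩
      exact ⟨a * x, Or.inr ⟨a, by simp [hu], x, rfl, rfl⟩, hle⟩
  have key_r : ∀ t : A, t ∈ dcl ({x} ∪ {x} * (Set.univ : Set A) ^ m) ↔ ∃ b, t ≤ x * b := by
    intro t
    constructor
    · rintro ⟨h, hh, hle⟩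
      rcases hh with hh | ⟨y, hy, b, -, rfl⟩
      · exact ⟨1, by rwa [mul_one, ← Set.mem_singleton_iff.mp hh]⟩
      · exact ⟨b, by rwa [Set.mem_singleton_iff.mp hy] at hle⟩
    · rintro ⟨b, hle⟩
      exact ⟨x * b, Or.inr ⟨x, rfl, b, by simp [hu], rfl⟩, hle⟩
  have hx : x ∈ dcl ({x} ∪ (Set.univ : Set A) ^ m * {x}) ∩ dcl ({x} ∪ {x} * (Set.univ : Set A) ^ m) :=
    ⟨(key_l x).mpr ⟨1, (one_mul x).ge⟩, (key_r x).mpr ⟨1, (mul_one x).ge⟩⟩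
  refine ⟨⟨⟨⟨x, hx⟩, ?_⟩, ?_, ?_⟩, hx, ?_⟩
  · rintro t ⟨s, hs, u, hu', rfl⟩
    obtain ⟨a, ha⟩ := (key_l s).mp hs.1
    obtain ⟨b, hb⟩ := (key_r s).mp hs.2
    obtain ⟨c, hc⟩ := (key_l u).mp hu'.1
    obtain ⟨d, hd⟩ := (key_r u).mp hu'.2
    constructor
    · exact (key_l _).mpr ⟨a * x * c, by
        calc s * u ≤ (a * x) * (c * x) := mul_le_mul' ha hc
        _ = a * x * c * x := by simp [mul_assoc]⟩
    · exact (key_r _).mpr ⟨b * x * d, by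
        calc s * u ≤ (x * b) * (x * d) := mul_le_mul' hb hd
        _ = x * (b * x * d) := by simp [mul_assoc]⟩
  · rintro t ⟨⟨h1, ⟨u, -, q, hq, rfl⟩, hle1⟩, ⟨h2, ⟨q', hq', v, -, rfl⟩, hle2⟩⟩
    obtain ⟨a, ha⟩ := (key_l q).mp hq.1
    obtain ⟨b, hb⟩ := (key_r q').mp hq'.2
    constructor
    · exact (key_l _).mpr ⟨u * a, le_trans hle1 (by
        calc u * q ≤ u * (a * x) := mul_le_mul_right ha u
        _ = u * a * x := (mul_assoc u a x).symm)⟩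
    · exact (key_r _).mpr ⟨b * v, le_trans hle2 (by
        calc q' * v ≤ (x * b) * v := mul_le_mul_left hb v
        _ = x * (b * v) := mul_assoc x b v)⟩
  · ext t
    constructor
    · rintro ⟨h, ⟨hh1, hh2⟩, hle⟩
      obtain ⟨a, ha⟩ := (key_l h).mp hh1
      obtain ⟨b, hb⟩ := (key_r h).mp hh2
      exact ⟨(key_l t).mpr ⟨a, hle.trans ha⟩, (key_r t).mpr ⟨b, hle.trans hb⟩⟩
    · intro ht
      exact ⟨t, ht, le_refl t⟩
  · rintro Q ⟨-, hQ2, -⟩ hxQ t ⟨ht1, ht2⟩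
    obtain ⟨a, ha⟩ := (key_l t).mp ht1
    obtain ⟨b, hb⟩ := (key_r t).mp ht2
    exact hQ2 ⟨⟨a * x, ⟨a, by simp [hu], x, hxQ, rfl⟩, ha⟩,
               ⟨x * b, ⟨x, hxQ, b, by simp [hu], rfl⟩, hb⟩⟩
end

section
/- Let m be a positive integer. Then A is m-regular if and only if every m-quasi-ideal Q of A satisfies (Q A^m Q] = Q. -/
open Pointwise

theorem m_regular_iff_quasi_ideal_eq {A : Type*} [Monoid A] [PartialOrder A]
    [CovariantClass A A (· * ·) (· ≤ ·)] [CovariantClass A A (Function.swap (· * ·)) (· ≤ ·)]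
    (m : ℕ) (hm : 0 < m) :
    IsMRegular A m ↔
      ∀ Q : Set A, IsMQuasiIdeal m Q → dcl (Q * (Set.univ : Set A) ^ m * Q) = Q := by
  have huniv : (Set.univ : Set A) ^ m = Set.univ := Set.univ_pow hm.ne'
  constructor
  · intro hreg Q hQ
    obtain ⟨⟨hne, hmul⟩, hquasi, hdcl⟩ := hQ
    ext t
    constructor
    · rintro ⟨h, hh, hth⟩
      rw [huniv] at hh
      obtain ⟨p, hp, q', hq', rfl⟩ := hh
      obtain ⟨q, hq, x, -, rfl⟩ := hp
      apply hquasi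
      constructor
      · exact ⟨q * x * q', by rw [huniv]; exact ⟨q * x, Set.mem_univ _, q', hq', rfl⟩, hth⟩
      · exact ⟨q * x * q', by rw [huniv]; exact ⟨q, hq, x * q', Set.mem_univ _, by rw [mul_assoc]⟩, hth⟩
    · intro ht
      obtain ⟨x, hx, hle⟩ := hreg t
      exact ⟨t * x * t, ⟨t * x, ⟨t, ht, x, hx, rfl⟩, t, ht, rfl⟩, hle⟩
  · intro h a
    set Q : Set A := {t | t ≤ a ∨ ((∃ x, t ≤ x * a) ∧ (∃ y, t ≤ a * y))} with hQdef
    have haQ : a ∈ Q := Or.inl le_rfl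
    have hright : ∀ t ∈ Q, ∃ y, t ≤ a * y := by
      rintro t (ht | ⟨-, hy⟩)
      · exact ⟨1, by simpa using ht⟩
      · exact hy
    have hleft : ∀ t ∈ Q, ∃ x, t ≤ x * a := by
      rintro t (ht | ⟨hx, -⟩)
      · exact ⟨1, by simpa using ht⟩
      · exact hx
    have hQ : IsMQuasiIdeal m Q := by
      refine ⟨⟨⟨a, haQ⟩, ?_⟩, ?_, ?_⟩
      · rintro z ⟨t, ht, t', ht', rfl⟩
        obtain ⟨s, hs⟩ := hright t ht
        obtain ⟨u, hu⟩ := hleft t' ht'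
        refine Or.inr ⟨⟨a * s * u, ?_⟩, ⟨s * (u * a), ?_⟩⟩
        · calc t * t' ≤ (a * s) * (u * a) := mul_le_mul' hs hu
            _ = (a * s * u) * a := by simp only [mul_assoc]
        · calc t * t' ≤ (a * s) * (u * a) := mul_le_mul' hs hu
            _ = a * (s * (u * a)) := by simp only [mul_assoc]
      · rintro t ⟨⟨h1, hm1, hle1⟩, ⟨h2, hm2, hle2⟩⟩
        rw [huniv] at hm1 hm2
        obtain ⟨u, -, q, hq, rfl⟩ := hm1
        obtain ⟨q', hq', v, -, rfl⟩ := hm2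
        obtain ⟨x, hx⟩ := hleft q hq
        obtain ⟨y, hy⟩ := hright q' hq'
        refine Or.inr ⟨⟨u * x, ?_⟩, ⟨y * v, ?_⟩⟩
        · calc t ≤ u * q := hle1
            _ ≤ u * (x * a) := mul_le_mul' le_rfl hx
            _ = (u * x) * a := by rw [mul_assoc]
        · calc t ≤ q' * v := hle2
            _ ≤ (a * y) * v := mul_le_mul' hy le_rfl
            _ = a * (y * v) := by rw [mul_assoc]
      · ext t
        constructor
        · rintro ⟨q, hq, htq⟩
          rcases hq with hq | ⟨⟨x, hx⟩, ⟨y, hy⟩⟩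
          · exact Or.inl (htq.trans hq)
          · exact Or.inr ⟨⟨x, htq.trans hx⟩, ⟨y, htq.trans hy⟩⟩
        · intro ht; exact ⟨t, ht, le_rfl⟩
    have := h Q hQ
    rw [← this] at haQ
    obtain ⟨hh, hhm, hah⟩ := haQ
    rw [huniv] at hhm
    obtain ⟨p, hp, q', hq', rfl⟩ := hhm
    obtain ⟨q, hq, x, -, rfl⟩ := hp
    obtain ⟨s, hs⟩ := hright q hq
    obtain ⟨u, hu⟩ := hleft q' hq'
    rw [huniv]
    refine ⟨s * x * u, Set.mem_univ _, ?_⟩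
    calc a ≤ q * x * q' := hah
      _ ≤ (a * s) * x * (u * a) := mul_le_mul' (mul_le_mul' hs le_rfl) hu
      _ = a * (s * x * u) * a := by simp only [mul_assoc]
end

section
/- Let m be a positive integer and suppose A is m-regular. Then (R²] = R for every m-right ideal R of A, and (L²] = L for every m-left ideal L of A (where R² = RR and L² = LL are set products). -/
open Pointwise

theorem sq_of_ideals_in_m_regular {A : Type*} [Monoid A] [PartialOrder A]
    [CovariantClass A A (· * ·) (· ≤ ·)] [CovariantClass A A (Function.swap (· * ·)) (· ≤ ·)]
    (m : ℕ) (hm : 0 < m) (hreg : IsMRegular A m) :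
    (∀ R : Set A, IsMRightIdeal m R → dcl (R * R) = R) ∧
    (∀ L : Set A, IsMLeftIdeal m L → dcl (L * L) = L) := by
  constructor
  · rintro R ⟨⟨hne, hss⟩, hRA, hdcl⟩
    apply Set.Subset.antisymm
    · intro t ⟨h, hh, hth⟩
      rw [← hdcl]
      exact ⟨h, hss hh, hth⟩
    · intro a ha
      obtain ⟨x, hx, hax⟩ := hreg a
      have h1 : a * x ∈ R := hRA (Set.mul_mem_mul ha hx)
      exact ⟨a * x * a, Set.mul_mem_mul h1 ha, hax⟩
  · rintro L ⟨⟨hne, hss⟩, hAL, hdcl⟩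
    apply Set.Subset.antisymm
    · intro t ⟨h, hh, hth⟩
      rw [← hdcl]
      exact ⟨h, hss hh, hth⟩
    · intro a ha
      obtain ⟨x, hx, hax⟩ := hreg a
      have h1 : x * a ∈ L := hAL (Set.mul_mem_mul hx ha)
      have : a * x * a = a * (x * a) := by rw [mul_assoc]
      exact ⟨a * (x * a), Set.mul_mem_mul ha h1, this ▸ hax⟩
end

section
/- Let m be a positive integer, suppose A is m-regular, and let J be an m-ideal of A (a subsemigroup that is both an m-left ideal and an m-right ideal). Then J is an m-regular subsemigroup: for every a ∈ J there exists y ∈ J^m with a ≤ a y a, where J^m is the m-fold set product of J with itself. -/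
open Pointwise

theorem m_ideal_of_m_regular_is_m_regular {A : Type*} [Monoid A] [PartialOrder A]
    [CovariantClass A A (· * ·) (· ≤ ·)] [CovariantClass A A (Function.swap (· * ·)) (· ≤ ·)]
    (m : ℕ) (hm : 0 < m) (hreg : IsMRegular A m) (J : Set A)
    (hJ : IsMLeftIdeal m J ∧ IsMRightIdeal m J) :
    ∀ a ∈ J, ∃ y ∈ J ^ m, a ≤ a * y * a := by
  intro a ha
  obtain ⟨x, hx, hax⟩ := hreg a
  have hy : x * a * x ∈ J := by
    apply hJ.2.2.1
    exact Set.mul_mem_mul (hJ.1.2.1 (Set.mul_mem_mul hx ha)) hx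
  have hay : a ≤ a * (x * a * x) * a := by
    calc a ≤ a * x * a := hax
    _ ≤ (a * x) * (a * x * a) := mul_le_mul_right hax (a * x)
    _ = a * (x * a * x) * a := by simp only [mul_assoc]
  have key : ∀ k : ℕ, ∃ w ∈ J ^ (k + 1), a ≤ a * w * a := by
    intro k
    induction k with
    | zero => exact ⟨x * a * x, by simpa using hy, hay⟩
    | succ n ih =>
      obtain ⟨w, hw, haw⟩ := ih
      refine ⟨w * (a * (x * a * x)), ?_, ?_⟩
      · rw [pow_succ]
        exact Set.mul_mem_mul hw (hJ.1.1.2 (Set.mul_mem_mul ha hy))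
      · calc a ≤ a * w * a := haw
        _ ≤ (a * w) * (a * (x * a * x) * a) := mul_le_mul_right hay (a * w)
        _ = a * (w * (a * (x * a * x))) * a := by simp only [mul_assoc]
  obtain ⟨w, hw, haw⟩ := key (m - 1)
  rw [Nat.sub_add_cancel hm] at hw
  exact ⟨w, hw, haw⟩
end

section
/- Let m be a positive integer and suppose A is m-regular. Then every m-quasi-ideal Q of A can be written in the form Q = R ∩ L = (RL], for some m-right ideal R and some m-left ideal L of A. -/
open Pointwise

lemma subset_dcl' {A : Type*} [Preorder A] (H : Set A) : H ⊆ dcl H :=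
  fun x hx => ⟨x, hx, le_refl x⟩

lemma dcl_dcl' {A : Type*} [Preorder A] (H : Set A) : dcl (dcl H) = dcl H := by
  apply Set.Subset.antisymm
  · rintro t ⟨s, ⟨h, hh, hs⟩, hts⟩
    exact ⟨h, hh, hts.trans hs⟩
  · exact subset_dcl' _

theorem m_quasi_ideal_eq_inter_and_dcl_mul {A : Type*} [Monoid A] [PartialOrder A]
    [CovariantClass A A (· * ·) (· ≤ ·)] [CovariantClass A A (Function.swap (· * ·)) (· ≤ ·)]
    (m : ℕ) (hm : 0 < m) (hreg : IsMRegular A m) (Q : Set A)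
    (hQ : IsMQuasiIdeal m Q) :
    ∃ R L : Set A, IsMRightIdeal m R ∧ IsMLeftIdeal m L ∧
      Q = R ∩ L ∧ Q = dcl (R * L) := by
  obtain ⟨⟨⟨q0, hq0⟩, hQmul⟩, hQquasi, hQdcl⟩ := hQ
  have huniv : (Set.univ : Set A) ^ m = Set.univ := Set.univ_pow hm.ne'
  rw [huniv] at hQquasi
  have hQR : Q ⊆ dcl (Q * Set.univ) := fun a ha =>
    ⟨a * 1, Set.mul_mem_mul ha trivial, le_of_eq (mul_one a).symm⟩
  have hQL : Q ⊆ dcl (Set.univ * Q) := fun a ha =>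
    ⟨1 * a, Set.mul_mem_mul trivial ha, le_of_eq (one_mul a).symm⟩
  refine ⟨dcl (Q * Set.univ), dcl (Set.univ * Q), ⟨⟨⟨q0, hQR hq0⟩, ?_⟩, ?_, dcl_dcl' _⟩,
    ⟨⟨⟨q0, hQL hq0⟩, ?_⟩, ?_, dcl_dcl' _⟩, ?_, ?_⟩
  · rintro t ⟨x, ⟨_, ⟨a, ha, u, -, rfl⟩, hx⟩, y, ⟨_, ⟨b, hb, v, -, rfl⟩, hy⟩, rfl⟩
    exact ⟨a * (u * b * v), Set.mul_mem_mul ha trivial,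
      (mul_le_mul' hx hy).trans (by simp [mul_assoc])⟩
  · rw [huniv]
    rintro t ⟨x, ⟨_, ⟨a, ha, u, -, rfl⟩, hx⟩, w, -, rfl⟩
    exact ⟨a * (u * w), Set.mul_mem_mul ha trivial,
      (mul_le_mul' hx le_rfl).trans (by simp [mul_assoc])⟩
  · rintro t ⟨x, ⟨_, ⟨u, -, a, ha, rfl⟩, hx⟩, y, ⟨_, ⟨v, -, b, hb, rfl⟩, hy⟩, rfl⟩
    exact ⟨u * a * v * b, Set.mul_mem_mul trivial hb,
      (mul_le_mul' hx hy).trans (by simp [mul_assoc])⟩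
  · rw [huniv]
    rintro t ⟨w, -, x, ⟨_, ⟨u, -, a, ha, rfl⟩, hx⟩, rfl⟩
    exact ⟨w * u * a, Set.mul_mem_mul trivial ha,
      (mul_le_mul' le_rfl hx).trans (by simp [mul_assoc])⟩
  · apply Set.Subset.antisymm
    · exact fun a ha => ⟨hQR ha, hQL ha⟩
    · rintro a ⟨h1, h2⟩
      exact hQquasi ⟨h2, h1⟩
  · apply Set.Subset.antisymm
    · intro a ha
      obtain ⟨x, -, hx⟩ := hreg a
      exact ⟨a * x * a, Set.mul_mem_mul
        ⟨a * x, Set.mul_mem_mul ha trivial, le_rfl⟩ (hQL ha), hx⟩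
    · rintro t ⟨_, ⟨r, ⟨_, ⟨a, ha, u, -, rfl⟩, hr⟩, l, ⟨_, ⟨v, -, b, hb, rfl⟩, hl⟩, rfl⟩, ht⟩
      have hrl : t ≤ a * u * (v * b) := ht.trans (mul_le_mul' hr hl)
      refine hQquasi ⟨⟨a * u * v * b, Set.mul_mem_mul trivial hb,
        hrl.trans (by simp [mul_assoc])⟩,
        ⟨a * (u * (v * b)), Set.mul_mem_mul ha trivial,
        hrl.trans (by simp [mul_assoc])⟩⟩
end

section
/- Let m be a positive integer and suppose A is m-regular. If Q is an m-quasi-ideal of A, then (Q²] = (Q³], where Q² and Q³ are the 2-fold and 3-fold set products of Q with itself. -/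
open Pointwise

theorem dcl_sq_eq_dcl_cube {A : Type*} [Monoid A] [PartialOrder A]
    [CovariantClass A A (· * ·) (· ≤ ·)] [CovariantClass A A (Function.swap (· * ·)) (· ≤ ·)]
    (m : ℕ) (hm : 0 < m) (hreg : IsMRegular A m) (Q : Set A)
    (hQ : IsMQuasiIdeal m Q) :
    dcl (Q ^ 2) = dcl (Q ^ 3) := by
  obtain ⟨⟨hne, hmul⟩, hquasi, hdcl⟩ := hQ
  have huniv : (Set.univ : Set A) ^ m = Set.univ := Set.univ_pow hm.ne'
  ext a
  constructor
  · rintro ⟨h, hh, hle⟩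
    rw [sq] at hh
    obtain ⟨q₁, hq₁, q₂, hq₂, rfl⟩ := hh
    obtain ⟨x, -, hx⟩ := hreg (q₁ * q₂)
    have ht : q₂ * x * q₁ ∈ Q := by
      apply hquasi
      constructor
      · exact ⟨q₂ * x * q₁, by
          rw [huniv]; exact Set.mul_mem_mul (Set.mem_univ _) hq₁, le_refl _⟩
      · exact ⟨q₂ * x * q₁, by
          rw [huniv, mul_assoc]
          exact Set.mul_mem_mul hq₂ (Set.mem_univ _), le_refl _⟩
    refine ⟨q₁ * (q₂ * x * q₁) * q₂, ?_, ?_⟩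
    · show q₁ * (q₂ * x * q₁) * q₂ ∈ Q ^ 3
      rw [pow_succ, sq]
      exact Set.mul_mem_mul (Set.mul_mem_mul hq₁ ht) hq₂
    · calc a ≤ q₁ * q₂ := hle
        _ ≤ q₁ * q₂ * x * (q₁ * q₂) := hx
        _ = q₁ * (q₂ * x * q₁) * q₂ := by simp [mul_assoc]
  · rintro ⟨h, hh, hle⟩
    refine ⟨h, ?_, hle⟩
    have : Q ^ 3 ⊆ Q ^ 2 := by
      rw [pow_succ, sq]
      exact fun z hz => by
        obtain ⟨u, hu, v, hv, rfl⟩ := hz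
        obtain ⟨p, hp, q, hq, rfl⟩ := hu
        show p * q * v ∈ Q * Q
        have : p * q * v = p * (q * v) := mul_assoc p q v
        rw [this]
        exact Set.mul_mem_mul hp (hmul (Set.mul_mem_mul hq hv))
    exact this hh
end
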